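/- Let R be a real 3×3 special orthogonal matrix and α_i, β_i ∈ ℝ³ linearly independent. Set α := Rᵀ α_i and β := Rᵀ β_i. Then the 3×3 matrix with columns (α/‖α_i‖, (α × β)/‖α_i × β_i‖, (α × (α × β))/‖α_i × (α_i × β_i)‖), multiplied on the right by R_iᵀ, equals Rᵀ, where R_i is the matrix with columns (α_i/‖α_i‖, (α_i × β_i)/‖α_i × β_i‖, (α_i × (α_i × β_i))/‖α_i × (α_i × β_i)‖). -/

import Mathlib

open scoped RealInnerProductSpace
open Matrix Filter

noncomputable section

/-- ℝ³ with the Euclidean norm and inner product. -/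
abbrev V3 : Type := EuclideanSpace ℝ (Fin 3)

/-- Identity identification of `V3` with plain functions `Fin 3 → ℝ`. -/
def toF (v : V3) : Fin 3 → ℝ := v

/-- Identity identification of plain functions `Fin 3 → ℝ` with `V3`. -/
def toE (v : Fin 3 → ℝ) : V3 := WithLp.toLp 2 v

/-- The cross product on ℝ³. -/
def cross (v w : V3) : V3 := toE (crossProduct (toF v) (toF w))

/-- The skew-symmetric matrix `v_×` with `v_× x = v × x`. -/
def skew (v : V3) : Matrix (Fin 3) (Fin 3) ℝ :=
  !![0, -(toF v 2), toF v 1; toF v 2, 0, -(toF v 0); -(toF v 1), toF v 0, 0]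

/-- Matrix-vector multiplication on `V3`. -/
def mulVecE (M : Matrix (Fin 3) (Fin 3) ℝ) (x : V3) : V3 := toE (M.mulVec (toF x))

/-- The 3×3 matrix whose columns are `v1, v2, v3`. -/
def colMat (v1 v2 v3 : V3) : Matrix (Fin 3) (Fin 3) ℝ :=
  Matrix.of fun i j => toF (![v1, v2, v3] j) i

/-- The matrix `R_i` with columns
`αi/‖αi‖, (αi × βi)/‖αi × βi‖, (αi × (αi × βi))/‖αi × (αi × βi)‖`. -/
def Rimat (αi βi : V3) : Matrix (Fin 3) (Fin 3) ℝ :=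
  colMat ((1 / ‖αi‖) • αi) ((1 / ‖cross αi βi‖) • cross αi βi)
    ((1 / ‖cross αi (cross αi βi)‖) • cross αi (cross αi βi))

/-! Both `Rimat αi βi` and the matrix on the left are built from the same three vectors,
the second time after applying `Rᵀ`. A rotation commutes with the cross product (the
adjugate of a special orthogonal matrix is its transpose) and with scalar multiplication,
so the matrix on the left is `Rᵀ * Rimat αi βi`. The columns of `Rimat αi βi` are the
normalisations of three pairwise orthogonal nonzero vectors, so `Rimat αi βi` is
orthogonal and the factor `Rimat αi βi * (Rimat αi βi)ᵀ` cancels. -/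

section CrossProduct

variable {R : Type*} [CommRing R]

theorem crossProduct_mulVec_mulVec (M : Matrix (Fin 3) (Fin 3) R) (u v : Fin 3 → R) :
    (M *ᵥ u) ⨯₃ (M *ᵥ v) = M.adjugateᵀ *ᵥ (u ⨯₃ v) := by
  funext i
  fin_cases i <;>
    simp [cross_apply, mulVec, dotProduct, adjugate_fin_three, Fin.sum_univ_three] <;> ring

theorem Matrix.adjugate_eq_transpose {n : Type*} [Fintype n] [DecidableEq n]
    {M : Matrix n n R} (horth : Mᵀ * M = 1) (hdet : M.det = 1) : M.adjugate = Mᵀ :=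
  calc M.adjugate = Mᵀ * (M * M.adjugate) := by
        rw [← mul_assoc, horth, one_mul]
    _ = Mᵀ := by rw [mul_adjugate, hdet, one_smul, mul_one]

theorem crossProduct_mulVec_of_specialOrthogonal {M : Matrix (Fin 3) (Fin 3) R}
    (horth : Mᵀ * M = 1) (hdet : M.det = 1) (u v : Fin 3 → R) :
    (M *ᵥ u) ⨯₃ (M *ᵥ v) = M *ᵥ (u ⨯₃ v) := by
  rw [crossProduct_mulVec_mulVec, Matrix.adjugate_eq_transpose horth hdet, transpose_transpose]

end CrossProduct

section InnerProductSpace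

variable {E : Type*} [NormedAddCommGroup E] [InnerProductSpace ℝ E]

theorem orthonormal_normalize {ι : Type*} {v : ι → E} (hz : ∀ i, v i ≠ 0)
    (ho : Pairwise fun i j => ⟪v i, v j⟫ = 0) : Orthonormal ℝ fun i => (1 / ‖v i‖) • v i := by
  refine ⟨fun i => ?_, fun i j hij => ?_⟩ <;> dsimp only
  · rw [norm_smul, norm_div, norm_one, norm_norm, one_div_mul_cancel (norm_ne_zero_iff.mpr (hz i))]
  · rw [inner_smul_left, inner_smul_right, ho hij, mul_zero, mul_zero]

theorem linearIndependent_pair_of_inner_eq_zero {u v : E} (hu : u ≠ 0) (hv : v ≠ 0)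
    (huv : ⟪u, v⟫ = 0) : LinearIndependent ℝ ![u, v] := by
  refine linearIndependent_of_ne_zero_of_inner_eq_zero (fun i => ?_) fun i j hij => ?_
  · fin_cases i <;> assumption
  · fin_cases i <;> fin_cases j <;> simp_all [real_inner_comm]

end InnerProductSpace

theorem toF_cross (u v : V3) : toF (cross u v) = toF u ⨯₃ toF v := rfl

theorem inner_eq_dotProduct_toF (u v : V3) : ⟪u, v⟫ = toF u ⬝ᵥ toF v := by
  rw [EuclideanSpace.inner_eq_star_dotProduct, star_trivial, dotProduct_comm]
  rfl

theorem inner_self_cross (u v : V3) : ⟪u, cross u v⟫ = 0 := by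
  rw [inner_eq_dotProduct_toF, toF_cross, dot_self_cross]

theorem inner_cross_self (u v : V3) : ⟪v, cross u v⟫ = 0 := by
  rw [inner_eq_dotProduct_toF, toF_cross, dot_cross_self]

theorem cross_ne_zero_iff_linearIndependent {u v : V3} :
    cross u v ≠ 0 ↔ LinearIndependent ℝ ![u, v] := by
  have hcomp : ![toF u, toF v] = WithLp.linearEquiv 2 ℝ (Fin 3 → ℝ) ∘ ![u, v] := by
    funext i
    fin_cases i <;> rfl
  rw [← (WithLp.linearEquiv 2 ℝ (Fin 3 → ℝ)).toLinearMap.linearIndependent_iff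
    (LinearEquiv.ker _), LinearEquiv.coe_coe, ← hcomp, ← crossProduct_ne_zero_iff_linearIndependent,
    ← toF_cross]
  exact not_congr (WithLp.ofLp_eq_zero 2).symm

theorem cross_mulVecE_of_specialOrthogonal {M : Matrix (Fin 3) (Fin 3) ℝ}
    (horth : Mᵀ * M = 1) (hdet : M.det = 1) (u v : V3) :
    cross (mulVecE M u) (mulVecE M v) = mulVecE M (cross u v) :=
  congrArg toE (crossProduct_mulVec_of_specialOrthogonal horth hdet (toF u) (toF v))

theorem mulVecE_smul (M : Matrix (Fin 3) (Fin 3) ℝ) (c : ℝ) (x : V3) :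
    mulVecE M (c • x) = c • mulVecE M x :=
  congrArg toE (mulVec_smul M c (toF x))

theorem colMat_mulVecE (M : Matrix (Fin 3) (Fin 3) ℝ) (u₁ u₂ u₃ : V3) :
    colMat (mulVecE M u₁) (mulVecE M u₂) (mulVecE M u₃) = M * colMat u₁ u₂ u₃ := by
  ext i j
  fin_cases j <;> simp [colMat, mulVecE, toE, toF, mul_apply, mulVec, dotProduct]

theorem transpose_colMat_mul_colMat (v₁ v₂ v₃ : V3) :
    (colMat v₁ v₂ v₃)ᵀ * colMat v₁ v₂ v₃ = of fun i j => ⟪![v₁, v₂, v₃] i, ![v₁, v₂, v₃] j⟫ := by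
  ext i j
  simp [colMat, mul_apply, inner_eq_dotProduct_toF, dotProduct]

theorem transpose_colMat_mul_colMat_of_orthonormal {v₁ v₂ v₃ : V3}
    (hv : Orthonormal ℝ ![v₁, v₂, v₃]) : (colMat v₁ v₂ v₃)ᵀ * colMat v₁ v₂ v₃ = 1 := by
  rw [transpose_colMat_mul_colMat]
  ext i j
  exact orthonormal_iff_ite.mp hv i j

theorem pairwise_inner_cross_eq_zero (u v : V3) :
    Pairwise fun i j =>
      ⟪![u, cross u v, cross u (cross u v)] i, ![u, cross u v, cross u (cross u v)] j⟫ = 0 := by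
  intro i j hij
  fin_cases i <;> fin_cases j <;> first
    | exact absurd rfl hij
    | (simp [inner_self_cross, inner_cross_self]; done)
    | (rw [real_inner_comm]; simp [inner_self_cross, inner_cross_self])

theorem transpose_Rimat_mul_Rimat {αi βi : V3} (hind : LinearIndependent ℝ ![αi, βi]) :
    (Rimat αi βi)ᵀ * Rimat αi βi = 1 := by
  have hα : αi ≠ 0 := hind.ne_zero 0
  have hαβ : cross αi βi ≠ 0 := cross_ne_zero_iff_linearIndependent.mpr hind
  have hααβ : cross αi (cross αi βi) ≠ 0 := cross_ne_zero_iff_linearIndependent.mpr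
    (linearIndependent_pair_of_inner_eq_zero hα hαβ (inner_self_cross αi βi))
  have hne : ∀ i, ![αi, cross αi βi, cross αi (cross αi βi)] i ≠ 0 := by
    intro i
    fin_cases i <;> assumption
  have hcols : ![(1 / ‖αi‖) • αi, (1 / ‖cross αi βi‖) • cross αi βi,
      (1 / ‖cross αi (cross αi βi)‖) • cross αi (cross αi βi)] =
      fun i => (1 / ‖![αi, cross αi βi, cross αi (cross αi βi)] i‖) •
        ![αi, cross αi βi, cross αi (cross αi βi)] i := by
    funext i
    fin_cases i <;> rfl
  apply transpose_colMat_mul_colMat_of_orthonormal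
  rw [hcols]
  exact orthonormal_normalize hne (pairwise_inner_cross_eq_zero αi βi)

/-- With `α = Rᵀ αi` and `β = Rᵀ βi`, the matrix with columns
`α/‖αi‖, (α × β)/‖αi × βi‖, (α × (α × β))/‖αi × (αi × βi)‖`, multiplied on the
right by `R_iᵀ`, equals `Rᵀ`. -/
theorem exact_attitude_reconstruction
    (R : Matrix (Fin 3) (Fin 3) ℝ) (hR : Rᵀ * R = 1 ∧ R.det = 1)
    (αi βi : V3) (hind : LinearIndependent ℝ ![αi, βi]) :
    colMat ((1 / ‖αi‖) • mulVecE Rᵀ αi)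
        ((1 / ‖cross αi βi‖) • cross (mulVecE Rᵀ αi) (mulVecE Rᵀ βi))
        ((1 / ‖cross αi (cross αi βi)‖)
          • cross (mulVecE Rᵀ αi) (cross (mulVecE Rᵀ αi) (mulVecE Rᵀ βi)))
      * (Rimat αi βi)ᵀ = Rᵀ := by
  have horth : Rᵀᵀ * Rᵀ = 1 := by rw [transpose_transpose, mul_eq_one_comm, hR.1]
  have hdet : Rᵀ.det = 1 := by rw [det_transpose, hR.2]
  simp only [cross_mulVecE_of_specialOrthogonal horth hdet, ← mulVecE_smul]
  rw [colMat_mulVecE, ← Rimat, mul_assoc, mul_eq_one_comm.mp (transpose_Rimat_mul_Rimat hind),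
    mul_one]
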